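/- arXiv:2502.09830 — 2 statements merged into one kernel-verified Lean document; each statement's English description precedes it below -/
import Mathlib

section
/- For every sufficiently large integer n divisible by 16, the derived graph F_{S_n} is n/100-connected, i.e., for every set U of at most n/100 vertices the graph F_{S_n} − U is connected. -/
/-- `Sedge n x y z` : `{x, y, z}` with `x < y < z` is an edge of the `3`-uniform
hypergraph `S_n` on `{1, …, n}`, i.e. `x + y + z = n` or `x + y + z = 2n`. -/
def Sedge (n x y z : ℕ) : Prop :=
  1 ≤ x ∧ x < y ∧ y < z ∧ z ≤ n ∧ (x + y + z = n ∨ x + y + z = 2 * n)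

/-- The derived graph `F_{S_n}`: `a` and `b` are adjacent iff some edge `x < y < z`
of `S_n` has `{a, b} = {x, z}`. -/
def FS (n : ℕ) : SimpleGraph ℕ where
  Adj a b := (∃ y, Sedge n a y b) ∨ (∃ y, Sedge n b y a)
  symm := ⟨fun _ _ h => h.symm⟩
  loopless := ⟨fun a h => by
    rcases h with ⟨y, h1, h2, h3, h4, h5⟩ | ⟨y, h1, h2, h3, h4, h5⟩ <;> omega⟩

/-!
Write `n = 16 m` and `u = |U|`. A pair `p < q` is an edge of `F_{S_n}` as soon as
`2 p + q < s < p + 2 q` for some `s ∈ {n, 2n}`: the middle vertex is `s - p - q`.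
Every window of `u + 1` consecutive integers contains a vertex outside `U`, which gives four
surviving relays `a ≈ 2u`, `b ≳ 8m`, `e ≲ 8m` and `d ≈ 16m`. The edges `ab`, `ae`, `ed` join
the relays, and every other surviving vertex `v` is adjacent to one of them: to `b` if
`v ≤ m` or `12m ≤ v ≤ 14m`, to `d` if `m < v < 8m`, to `a` if `8m ≤ v < 12m`, and to `e`
if `v > 14m`.
-/

open Finset

namespace SimpleGraph

variable {V : Type*} {G : SimpleGraph V} {s : Set V} {x y z : V}

def ReachableIn (G : SimpleGraph V) (s : Set V) (x y : V) : Prop :=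
  ∃ (hx : x ∈ s) (hy : y ∈ s), (G.induce s).Reachable ⟨x, hx⟩ ⟨y, hy⟩

theorem ReachableIn.refl (hx : x ∈ s) : G.ReachableIn s x x :=
  ⟨hx, hx, .rfl⟩

theorem ReachableIn.of_adj (hx : x ∈ s) (hxy : G.Adj x y) (hyz : G.ReachableIn s y z) :
    G.ReachableIn s x z := by
  obtain ⟨hy, hz, hr⟩ := hyz
  have hadj : (G.induce s).Adj ⟨x, hx⟩ ⟨y, hy⟩ := hxy
  exact ⟨hx, hz, hadj.reachable.trans hr⟩

theorem induce_connected_of_forall_reachableIn {c : V} (hc : c ∈ s)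
    (h : ∀ x ∈ s, G.ReachableIn s x c) : (G.induce s).Connected := by
  have hreach (x : s) : (G.induce s).Reachable x ⟨c, hc⟩ := by
    obtain ⟨_, _, hr⟩ := h x x.2
    exact hr
  rw [connected_iff]
  exact ⟨fun x y => (hreach x).trans (hreach y).symm, ⟨⟨c, hc⟩⟩⟩

end SimpleGraph

theorem Finset.exists_notMem_of_card_add_le (U : Finset ℕ) {l r : ℕ} (h : #U + l ≤ r) :
    ∃ x, l ≤ x ∧ x ≤ r ∧ x ∉ U := by
  have hcard : #U < #(Icc l r) := by
    rw [Nat.card_Icc]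
    omega
  obtain ⟨x, hx, hxU⟩ := exists_mem_notMem_of_card_lt_card hcard
  rw [mem_Icc] at hx
  exact ⟨x, hx.1, hx.2, hxU⟩

theorem FS_adj_of_lt_of_lt {n a b s : ℕ} (hs : s = n ∨ s = 2 * n) (ha : 1 ≤ a) (hb : b ≤ n)
    (h₁ : 2 * a + b < s) (h₂ : s < a + 2 * b) : (FS n).Adj a b :=
  Or.inl ⟨s - a - b, ha, by omega, by omega, hb, by omega⟩

theorem FS_induce_connected {m : ℕ} {U : Finset ℕ} (hU : 2 * #U + 2 ≤ m) :
    ((FS (16 * m)).induce ((Icc 1 (16 * m) : Set ℕ) \ (U : Set ℕ))).Connected := by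
  set s : Set ℕ := (Icc 1 (16 * m) : Set ℕ) \ (U : Set ℕ)
  have mem_s {x : ℕ} (h₁ : 1 ≤ x) (h₂ : x ≤ 16 * m) (hxU : x ∉ U) : x ∈ s := by
    simp [s, h₁, h₂, hxU]
  have adj_n {p q : ℕ} (h₀ : 1 ≤ p) (h₁ : 2 * p + q < 16 * m) (h₂ : 16 * m < p + 2 * q)
      (h₃ : q ≤ 16 * m) : (FS (16 * m)).Adj p q :=
    FS_adj_of_lt_of_lt (.inl rfl) h₀ h₃ h₁ h₂
  have adj_2n {p q : ℕ} (h₀ : 1 ≤ p) (h₁ : 2 * p + q < 2 * (16 * m))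
      (h₂ : 2 * (16 * m) < p + 2 * q) (h₃ : q ≤ 16 * m) : (FS (16 * m)).Adj p q :=
    FS_adj_of_lt_of_lt (.inr rfl) h₀ h₃ h₁ h₂
  obtain ⟨a, ha₁, ha₂, haU⟩ :=
    U.exists_notMem_of_card_add_le (l := 2 * #U + 3) (r := 3 * #U + 3) (by omega)
  obtain ⟨b, hb₁, hb₂, hbU⟩ :=
    U.exists_notMem_of_card_add_le (l := 8 * m + 1) (r := 8 * m + #U + 1) (by omega)
  obtain ⟨e, he₁, he₂, heU⟩ :=
    U.exists_notMem_of_card_add_le (l := 8 * m - #U - 1) (r := 8 * m - 1) (by omega)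
  obtain ⟨d, hd₁, hd₂, hdU⟩ :=
    U.exists_notMem_of_card_add_le (l := 16 * m - #U) (r := 16 * m) (by omega)
  have has : a ∈ s := mem_s (by omega) (by omega) haU
  have ha : (FS (16 * m)).ReachableIn s a a := .refl has
  have hb : (FS (16 * m)).ReachableIn s b a :=
    .of_adj (mem_s (by omega) (by omega) hbU)
      (adj_n (by omega) (by omega) (by omega) (by omega)).symm ha
  have he : (FS (16 * m)).ReachableIn s e a :=
    .of_adj (mem_s (by omega) (by omega) heU)
      (adj_n (by omega) (by omega) (by omega) (by omega)).symm ha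
  have hd : (FS (16 * m)).ReachableIn s d a :=
    .of_adj (mem_s (by omega) (by omega) hdU)
      (adj_2n (by omega) (by omega) (by omega) (by omega)).symm he
  refine SimpleGraph.induce_connected_of_forall_reachableIn has fun v hv => ?_
  obtain ⟨hv₁, hv₂⟩ : 1 ≤ v ∧ v ≤ 16 * m := by simpa [s] using hv.1
  by_cases h₁ : v ≤ m
  · exact .of_adj hv (adj_n (by omega) (by omega) (by omega) (by omega)) hb
  by_cases h₂ : v < 8 * m
  · exact .of_adj hv (adj_2n (by omega) (by omega) (by omega) (by omega)) hd
  by_cases h₃ : v < 12 * m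
  · exact .of_adj hv (adj_n (by omega) (by omega) (by omega) (by omega)).symm ha
  by_cases h₄ : v ≤ 14 * m
  · exact .of_adj hv (adj_2n (by omega) (by omega) (by omega) (by omega)).symm hb
  · exact .of_adj hv (adj_2n (by omega) (by omega) (by omega) (by omega)).symm he

/-- For every sufficiently large `n` divisible by `16`, the derived graph `F_{S_n}` is
`n/100`-connected: for every set `U ⊆ {1, …, n}` with `|U| ≤ n/100` the graph
`F_{S_n} − U` is connected. -/
theorem FS_highly_connected : ∃ N : ℕ, ∀ n : ℕ, N ≤ n → 16 ∣ n →
    ∀ U : Finset ℕ, U ⊆ Finset.Icc 1 n → 100 * U.card ≤ n →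
      ((FS n).induce ((Finset.Icc 1 n : Set ℕ) \ (U : Set ℕ))).Connected := by
  refine ⟨32, ?_⟩
  rintro n hn ⟨m, rfl⟩ U - hU
  exact FS_induce_connected (by omega)
end

section
/- Let F be a strictly 2-balanced graph. If H is the union of two distinct copies of F that intersect in at least two common edges, then d₂(H) > d₂(F). -/
/-!
The intersection `I = F₁ ⊓ F₂` is a proper subgraph of `F₁`: otherwise `F₁ ≤ F₂`, and a
finite graph is not isomorphic to a proper subgraph of itself. Transported into `F` along
`F₁ ≃ F`, it becomes a proper subgraph of `F` with an edge, so `d₂(I) < d₂(F)`; having two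
edges, `I` has at least three vertices. Inclusion–exclusion gives `v(H) = 2 v(F) - v(I)` and
`e(H) = 2 e(F) - e(I)`, and removing from two copies of `F` a part of density below `d₂(F)`
leaves density above `d₂(F)`.
-/

open SimpleGraph

/-- `d2v v e` : the `2`-density of a graph with `v` vertices and `e ≥ 1` edges. -/
noncomputable def d2v (v e : ℕ) : ℝ :=
  if 3 ≤ v then ((e : ℝ) - 1) / ((v : ℝ) - 2) else 1

/-- The `2`-density of a graph (given as a subgraph of the complete graph on `ℕ`). -/
noncomputable def d2 (H : Subgraph (⊤ : SimpleGraph ℕ)) : ℝ :=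
  d2v H.verts.ncard H.edgeSet.ncard

/-- A graph `F` (with at least two edges) is strictly `2`-balanced if every proper
subgraph with at least one edge has strictly smaller `2`-density. -/
def Strictly2Balanced (F : Subgraph (⊤ : SimpleGraph ℕ)) : Prop :=
  2 ≤ F.edgeSet.ncard ∧
  ∀ F' ≤ F, F' ≠ F → F'.edgeSet.Nonempty → d2 F' < d2 F

namespace SimpleGraph.Subgraph

variable {V W : Type*} {G : SimpleGraph V} {G' : SimpleGraph W}

lemma ncard_edgeSet_eq_natCard_edgeSet_coe (H : G.Subgraph) :
    H.edgeSet.ncard = Nat.card H.coe.edgeSet := by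
  rw [← H.image_coe_edgeSet_coe,
    Set.ncard_image_of_injective _ (Sym2.map.injective Subtype.val_injective),
    Nat.card_coe_set_eq]

lemma finite_edgeSet {H : G.Subgraph} (h : H.verts.Finite) : H.edgeSet.Finite := by
  have := h.to_subtype
  rw [← H.image_coe_edgeSet_coe]
  exact (Set.toFinite _).image _

lemma ncard_edgeSet_le_choose_two {H : G.Subgraph} (h : H.verts.Finite) :
    H.edgeSet.ncard ≤ H.verts.ncard.choose 2 := by
  classical
  have := h.fintype
  rw [ncard_edgeSet_eq_natCard_edgeSet_coe, Nat.card_eq_fintype_card, ← edgeFinset_card,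
    Set.ncard_eq_toFinset_card', Set.toFinset_card]
  exact card_edgeFinset_le_card_choose_two

lemma three_le_ncard_verts {H : G.Subgraph} (h : H.verts.Finite) (he : 2 ≤ H.edgeSet.ncard) :
    3 ≤ H.verts.ncard := by
  by_contra! hv
  have := (ncard_edgeSet_le_choose_two h).trans' he
  interval_cases H.verts.ncard <;> simp at this

lemma ncard_verts_eq_of_iso {H : G.Subgraph} {H' : G'.Subgraph} (e : H.coe ≃g H'.coe) :
    H.verts.ncard = H'.verts.ncard := by
  rw [← Nat.card_coe_set_eq, ← Nat.card_coe_set_eq]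
  exact Nat.card_congr e.toEquiv

lemma ncard_edgeSet_eq_of_iso {H : G.Subgraph} {H' : G'.Subgraph} (e : H.coe ≃g H'.coe) :
    H.edgeSet.ncard = H'.edgeSet.ncard := by
  rw [ncard_edgeSet_eq_natCard_edgeSet_coe, ncard_edgeSet_eq_natCard_edgeSet_coe]
  exact Nat.card_congr e.mapEdgeSet

lemma finite_verts_of_iso {H : G.Subgraph} {H' : G'.Subgraph} (e : H.coe ≃g H'.coe)
    (h : H'.verts.Finite) : H.verts.Finite :=
  have := h.to_subtype
  Set.finite_coe_iff.mp (Finite.of_equiv _ e.toEquiv.symm)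

lemma eq_of_le_of_iso {H H' : G.Subgraph} (hle : H ≤ H') (h : H'.verts.Finite)
    (e : H.coe ≃g H'.coe) : H = H' := by
  refine le_antisymm hle ⟨?_, fun v w hvw ↦ ?_⟩
  · exact (Set.eq_of_subset_of_ncard_le hle.1 (ncard_verts_eq_of_iso e).ge h).ge
  · have hE := Set.eq_of_subset_of_ncard_le (edgeSet_mono hle) (ncard_edgeSet_eq_of_iso e).ge
      (finite_edgeSet h)
    exact Subgraph.mem_edgeSet.mp (hE ▸ Subgraph.mem_edgeSet.mpr hvw)

lemma exists_le_iso_of_le {I B : G.Subgraph} {F : G'.Subgraph} (hle : I ≤ B)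
    (φ : B.coe ≃g F.coe) : ∃ J ≤ F, Nonempty (I.coe ≃g J.coe) := by
  set R := B.restrict I
  have hR : Subgraph.coeSubgraph R = I := by
    rw [coeSubgraph_restrict_eq, inf_eq_right.mpr hle]
  refine ⟨Subgraph.coeSubgraph (R.map φ.toCopy.toHom), coeSubgraph_le _, ⟨?_⟩⟩
  rw [← hR]
  exact ((B.coeCopy.isoSubgraphMap R).symm.trans (φ.toCopy.isoSubgraphMap R)).trans
    (F.coeCopy.isoSubgraphMap _)

lemma ncard_verts_sup_add_ncard_verts_inf {H H' : G.Subgraph} (h : H.verts.Finite)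
    (h' : H'.verts.Finite) :
    (H ⊔ H').verts.ncard + (H ⊓ H').verts.ncard = H.verts.ncard + H'.verts.ncard :=
  Set.ncard_union_add_ncard_inter _ _ h h'

lemma ncard_edgeSet_sup_add_ncard_edgeSet_inf {H H' : G.Subgraph} (h : H.verts.Finite)
    (h' : H'.verts.Finite) :
    (H ⊔ H').edgeSet.ncard + (H ⊓ H').edgeSet.ncard = H.edgeSet.ncard + H'.edgeSet.ncard := by
  rw [edgeSet_sup, edgeSet_inf]
  exact Set.ncard_union_add_ncard_inter _ _ (finite_edgeSet h) (finite_edgeSet h')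

end SimpleGraph.Subgraph

lemma d2_eq_of_iso {H H' : Subgraph (⊤ : SimpleGraph ℕ)} (e : H.coe ≃g H'.coe) :
    d2 H = d2 H' := by
  rw [d2, d2, Subgraph.ncard_verts_eq_of_iso e, Subgraph.ncard_edgeSet_eq_of_iso e]

lemma d2v_lt_d2v_of_add_eq {v e v' e' w f : ℕ} (hv' : 3 ≤ v') (hle : v' ≤ v)
    (hw : w + v' = v + v) (hf : f + e' = e + e) (h : d2v v' e' < d2v v e) :
    d2v v e < d2v w f := by
  have hv : 3 ≤ v := hv'.trans hle
  have hw3 : 3 ≤ w := by omega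
  unfold d2v at h ⊢
  rw [if_pos hv', if_pos hv] at h
  rw [if_pos hv, if_pos hw3]
  have hv'r : (3 : ℝ) ≤ v' := by exact_mod_cast hv'
  have hler : (v' : ℝ) ≤ v := by exact_mod_cast hle
  have hwr : (w : ℝ) = v + v - v' := by
    linarith [show (w : ℝ) + v' = v + v by exact_mod_cast hw]
  have hfr : (f : ℝ) = e + e - e' := by
    linarith [show (f : ℝ) + e' = e + e by exact_mod_cast hf]
  rw [div_lt_div_iff₀ (by linarith) (by linarith)] at h
  rw [hwr, hfr, div_lt_div_iff₀ (by linarith) (by linarith)]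
  linarith [show ((e : ℝ) + e - e' - 1) * (v - 2) - (e - 1) * (v + v - v' - 2)
    = (e - 1) * (v' - 2) - (e' - 1) * (v - 2) by ring]

/-- Let `F` be a strictly `2`-balanced graph.  If `H = F₁ ∪ F₂` is the union of two
distinct copies of `F` intersecting in at least two common edges, then
`d₂(H) > d₂(F)`. -/
theorem d2_union_of_two_copies (F : Subgraph (⊤ : SimpleGraph ℕ))
    (hFfin : F.verts.Finite) (hbal : Strictly2Balanced F)
    (F₁ F₂ : Subgraph (⊤ : SimpleGraph ℕ)) (hne : F₁ ≠ F₂)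
    (h₁ : Nonempty (F₁.coe ≃g F.coe)) (h₂ : Nonempty (F₂.coe ≃g F.coe))
    (hint : 2 ≤ (F₁.edgeSet ∩ F₂.edgeSet).ncard) :
    d2 F < d2 (F₁ ⊔ F₂) := by
  obtain ⟨φ₁⟩ := h₁
  obtain ⟨φ₂⟩ := h₂
  have hF₁ := Subgraph.finite_verts_of_iso φ₁ hFfin
  have hF₂ := Subgraph.finite_verts_of_iso φ₂ hFfin
  have hIe : 2 ≤ (F₁ ⊓ F₂).edgeSet.ncard := by rwa [Subgraph.edgeSet_inf]
  have hIne : F₁ ⊓ F₂ ≠ F₁ := fun h ↦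
    hne (Subgraph.eq_of_le_of_iso (inf_eq_left.mp h) hF₂ (φ₁.trans φ₂.symm))
  have hIle : F₁ ⊓ F₂ ≤ F₁ := inf_le_left
  obtain ⟨J, hJle, ⟨ψ⟩⟩ := Subgraph.exists_le_iso_of_le hIle φ₁
  have hJne : J ≠ F := by
    rintro rfl
    exact hIne (Subgraph.eq_of_le_of_iso hIle hF₁ (ψ.trans φ₁.symm))
  have hJe : 2 ≤ J.edgeSet.ncard := Subgraph.ncard_edgeSet_eq_of_iso ψ ▸ hIe
  have hd : d2 (F₁ ⊓ F₂) < d2 F :=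
    d2_eq_of_iso ψ ▸ hbal.2 J hJle hJne (Set.nonempty_of_ncard_ne_zero (by omega))
  have hv := Subgraph.ncard_verts_sup_add_ncard_verts_inf hF₁ hF₂
  have he := Subgraph.ncard_edgeSet_sup_add_ncard_edgeSet_inf hF₁ hF₂
  rw [Subgraph.ncard_verts_eq_of_iso φ₁, Subgraph.ncard_verts_eq_of_iso φ₂] at hv
  rw [Subgraph.ncard_edgeSet_eq_of_iso φ₁, Subgraph.ncard_edgeSet_eq_of_iso φ₂] at he
  have hIv : (F₁ ⊓ F₂).verts.ncard ≤ F.verts.ncard :=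
    Subgraph.ncard_verts_eq_of_iso φ₁ ▸ Set.ncard_le_ncard (Subgraph.verts_mono hIle) hF₁
  have hIv₃ := Subgraph.three_le_ncard_verts (hF₁.subset (Subgraph.verts_mono hIle)) hIe
  exact d2v_lt_d2v_of_add_eq hIv₃ hIv hv he hd
end
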